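/- Let G = Z₂ × Z₄ and θ a normalized orthomorphism of G with A₂₂ = {x}. Then {a⁻¹θ(a) : a ∈ A₄₄} = {x, θ(x)}. -/

import Mathlib

/-- The group `ℤ₂ × ℤ₄` (written additively). -/
abbrev G24 : Type := ZMod 2 × ZMod 4

/-- A normalized orthomorphism: a bijection fixing the identity whose associated
complete mapping `x ↦ -x + θ x` (i.e. `x⁻¹θ(x)` in additive notation) is a bijection. -/
def IsNormOrtho (θ : G24 → G24) : Prop :=
  Function.Bijective θ ∧ θ 0 = 0 ∧ Function.Bijective (fun x => -x + θ x)

/-- Orthogonality of orthomorphisms: `x ↦ θ₁(x)⁻¹θ₂(x)` is a bijection. -/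
def Orthogonal (θ₁ θ₂ : G24 → G24) : Prop :=
  Function.Bijective (fun x => -θ₁ x + θ₂ x)

/-- `A i j θ = {x : order of x is i and order of θ(x) is j}`. -/
def A (i j : ℕ) (θ : G24 → G24) : Set G24 :=
  {x | addOrderOf x = i ∧ addOrderOf (θ x) = j}

/-!
The involutions of `ℤ₂ × ℤ₄` form, with `0`, a Klein four-group, and all elements of order `4`
have the same double. Write `φ a = -a + θ a`. If `A₂₂ = {x}`, then `x ≠ θ x` (a fixed point of `θ`
is a zero of `φ`), so the involutions are `x`, `θ x` and `x + θ x = φ x`. For `a ∈ A₄₄` the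
element `φ a` is an involution (as `a + a = θ a + θ a`) other than `φ x`. Conversely, if `φ a` is
an involution then `θ a = a + φ a` has the same order as `a`, so `a ∈ A₂₂` or `a ∈ A₄₄`; the first
case forces `a = x`, which is excluded when `φ a ∈ {x, θ x}`.
-/

namespace G24

lemma add_self_eq_add_self {a b : G24} (ha : a + a ≠ 0) (hb : b + b ≠ 0) : a + a = b + b := by
  revert a b; decide

lemma eq_or_eq_or_eq_add {x t y : G24} (hx : x + x = 0) (ht : t + t = 0) (hx0 : x ≠ 0)
    (ht0 : t ≠ 0) (hxt : x ≠ t) (hy : y + y = 0) (hy0 : y ≠ 0) :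
    y = x ∨ y = t ∨ y = x + t := by
  revert x t y; decide

lemma addOrderOf_eq (a : G24) :
    addOrderOf a = if a = 0 then 1 else if a + a = 0 then 2 else 4 := by
  split_ifs with h0 h2
  · simp [h0]
  · exact addOrderOf_eq_prime (by rwa [two_nsmul]) h0
  · refine addOrderOf_eq_prime_pow (p := 2) (n := 1) (by rwa [pow_one, two_nsmul]) ?_
    revert a; decide

lemma addOrderOf_eq_two_iff {a : G24} : addOrderOf a = 2 ↔ a + a = 0 ∧ a ≠ 0 := by
  rw [addOrderOf_eq]; split_ifs <;> simp_all

lemma addOrderOf_eq_four_iff {a : G24} : addOrderOf a = 4 ↔ a + a ≠ 0 := by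
  rw [addOrderOf_eq]; split_ifs <;> simp_all

end G24

namespace IsNormOrtho

variable {θ : G24 → G24}

lemma apply_eq_zero_iff (hθ : IsNormOrtho θ) {a : G24} : θ a = 0 ↔ a = 0 :=
  hθ.1.injective.eq_iff' hθ.2.1

lemma neg_add_apply_eq_zero_iff (hθ : IsNormOrtho θ) {a : G24} : -a + θ a = 0 ↔ a = 0 :=
  hθ.2.2.injective.eq_iff' (by simp [hθ.2.1])

lemma apply_ne_self (hθ : IsNormOrtho θ) {a : G24} (ha : a ≠ 0) : θ a ≠ a := fun h =>
  ha (hθ.neg_add_apply_eq_zero_iff.mp (by rw [h, neg_add_cancel]))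

lemma addOrderOf_apply_eq (hθ : IsNormOrtho θ) {a : G24} (h : (-a + θ a) + (-a + θ a) = 0) :
    addOrderOf (θ a) = addOrderOf a := by
  have hdouble : θ a + θ a = a + a := by
    rw [← sub_eq_zero, ← h]; abel
  simp only [G24.addOrderOf_eq, hθ.apply_eq_zero_iff, hdouble]

lemma neg_add_apply_eq_of_mem_A44 (hθ : IsNormOrtho θ) {x a : G24} (hx : x ∈ A 2 2 θ)
    (ha : a ∈ A 4 4 θ) :
    -a + θ a = x ∨ -a + θ a = θ x := by
  obtain ⟨hx2, hθx2⟩ := hx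
  obtain ⟨ha4, hθa4⟩ := ha
  rw [G24.addOrderOf_eq_two_iff] at hx2 hθx2
  rw [G24.addOrderOf_eq_four_iff] at ha4 hθa4
  have hφa2 : (-a + θ a) + (-a + θ a) = 0 := by
    rw [← sub_eq_zero.mpr (G24.add_self_eq_add_self hθa4 ha4)]; abel
  have hφa0 : -a + θ a ≠ 0 := fun h =>
    ha4 (by rw [hθ.neg_add_apply_eq_zero_iff.mp h, add_zero])
  have hφx : -x + θ x = x + θ x := by rw [neg_eq_of_add_eq_zero_left hx2.1]
  have hφax : -a + θ a ≠ x + θ x := by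
    rw [← hφx]
    intro h
    exact ha4 (hθ.2.2.injective h ▸ hx2.1)
  have hxθx : x ≠ θ x := (hθ.apply_ne_self hx2.2).symm
  rcases G24.eq_or_eq_or_eq_add hx2.1 hθx2.1 hx2.2 hθx2.2 hxθx hφa2 hφa0 with h | h | h
  exacts [Or.inl h, Or.inr h, absurd h hφax]

lemma mem_A44_of_neg_add_apply_eq (hθ : IsNormOrtho θ) {x a : G24} (hx : A 2 2 θ = {x})
    (ha : -a + θ a = x ∨ -a + θ a = θ x) : a ∈ A 4 4 θ := by
  obtain ⟨hx2, hθx2⟩ : x ∈ A 2 2 θ := hx ▸ rfl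
  rw [G24.addOrderOf_eq_two_iff] at hx2 hθx2
  have hφa2 : (-a + θ a) + (-a + θ a) = 0 := by rcases ha with h | h <;> simp [h, hx2, hθx2]
  have horder := hθ.addOrderOf_apply_eq hφa2
  have ha0 : a ≠ 0 := by
    rintro rfl
    rcases ha with h | h <;> simp only [hθ.2.1, neg_zero, add_zero] at h
    exacts [hx2.2 h.symm, hθx2.2 h.symm]
  have hax : a ≠ x := by
    rintro rfl
    rw [neg_eq_of_add_eq_zero_left hx2.1] at ha
    rcases ha with h | h
    · exact hθx2.2 (by simpa using h)
    · exact hx2.2 (by simpa using h)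
  have ha4 : addOrderOf a = 4 := by
    refine G24.addOrderOf_eq_four_iff.mpr fun haa => hax ?_
    have ha2 := G24.addOrderOf_eq_two_iff.mpr ⟨haa, ha0⟩
    have hmem : a ∈ A 2 2 θ := ⟨ha2, horder ▸ ha2⟩
    rwa [hx] at hmem
  exact ⟨ha4, horder ▸ ha4⟩

end IsNormOrtho

theorem complete_map_image_A44 (θ : G24 → G24) (hθ : IsNormOrtho θ) (x : G24)
    (hx : A 2 2 θ = {x}) :
    (fun a => -a + θ a) '' A 4 4 θ = {x, θ x} := by
  ext y
  constructor
  · rintro ⟨a, ha, rfl⟩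
    exact hθ.neg_add_apply_eq_of_mem_A44 (hx ▸ rfl) ha
  · intro hy
    obtain ⟨a, rfl⟩ := hθ.2.2.surjective y
    exact ⟨a, hθ.mem_A44_of_neg_add_apply_eq hx hy, rfl⟩
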